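/- arXiv:2001.03252 — 3 statements merged into one kernel-verified Lean document; each statement's English description precedes it below -/
import Mathlib

section
/- Let p_0, p_1, …, p_{2n−1} be 2n distinct points on a common circle in counterclockwise order. Then the minimum, over all perfect non-crossing matchings M of the points, of the maximum edge length of M equals the minimum of the two values max_{0 ≤ k < n} dist(p_{2k}, p_{2k+1}) and max_{0 ≤ k < n} dist(p_{2k+1}, p_{2k+2}) (indices modulo 2n), i.e., the optimum is attained by one of the two perfect matchings consisting only of boundary edges. -/
noncomputable section

/-- The Euclidean plane. -/
abbrev Pt : Type := EuclideanSpace ℝ (Fin 2)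

/-- The determinant of two plane vectors (twice the signed area). -/
def det2 (u v : Pt) : ℝ := u 0 * v 1 - u 1 * v 0

/-- The points `p 0, p 1, …, p (N-1)` (indices in `ZMod N`) are distinct, lie on a common
circle, and are labeled in counterclockwise order: every triple of points with increasing
indices is positively (counterclockwise) oriented. -/
def OnCircleCCW (N : ℕ) (p : ZMod N → Pt) : Prop :=
  (∃ c : Pt, ∃ r : ℝ, 0 < r ∧ ∀ i, dist (p i) c = r) ∧
  Function.Injective p ∧
  (∀ i j k : ZMod N, i.val < j.val → j.val < k.val →
    0 < det2 (p j - p i) (p k - p i))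

/-- `σ` encodes a perfect non-crossing matching of the points `p 0, …, p (N-1)`: it is a
fixed-point free involution of the indices, and the closed segments induced by two distinct
edges are disjoint. -/
def IsNCM (N : ℕ) (p : ZMod N → Pt) (σ : ZMod N → ZMod N) : Prop :=
  (∀ i, σ (σ i) = i) ∧ (∀ i, σ i ≠ i) ∧
  (∀ i j : ZMod N, j ≠ i → j ≠ σ i →
    segment ℝ (p i) (p (σ i)) ∩ segment ℝ (p j) (p (σ j)) = ∅)

/-!
The two boundary matchings are non-crossing, which gives one inequality. Conversely, let
`{2a, 2a+1}` and `{2b+1, 2b+2}` be longest edges of the two boundary matchings. These two gaps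
cut the points into two runs of odd length, so every perfect matching has an edge `{u, v}` from
one run to the other. Of the two arcs of the circle between `u` and `v`, one contains the first
gap and the other the second; the shorter arc is at most a half circle, and on `[0, π]` the chord
`2r sin(θ/2)` is increasing in the arc `θ`, so `|uv|` is at least the shorter gap edge.
-/

open Real

lemma det2_sub_cyclic (a b c : Pt) : det2 (b - a) (c - a) = det2 (c - b) (a - b) := by
  simp only [det2, PiLp.sub_apply]; ring

lemma segment_inter_segment_eq_empty_of_det2_pos {a b c d : Pt}
    (hc : 0 < det2 (b - a) (c - a)) (hd : 0 < det2 (b - a) (d - a)) :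
    segment ℝ a b ∩ segment ℝ c d = ∅ := by
  refine Set.eq_empty_of_forall_notMem fun x ⟨hxab, hxcd⟩ => ?_
  obtain ⟨s, t, -, -, hst, hx⟩ := hxab
  obtain ⟨u, w, hu, hw, huw, hx'⟩ := hxcd
  have hab : det2 (b - a) (x - a) = 0 := by
    rw [← hx, show s = 1 - t by linarith]
    simp only [det2, PiLp.sub_apply, PiLp.add_apply, PiLp.smul_apply, smul_eq_mul]
    ring
  have hcd : det2 (b - a) (x - a) = u * det2 (b - a) (c - a) + w * det2 (b - a) (d - a) := by
    rw [← hx', show u = 1 - w by linarith]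
    simp only [det2, PiLp.sub_apply, PiLp.add_apply, PiLp.smul_apply, smul_eq_mul]
    ring
  have hpos : 0 < u * det2 (b - a) (c - a) + w * det2 (b - a) (d - a) := by
    rcases hu.eq_or_lt with rfl | hu
    · rw [show w = 1 by linarith]
      linarith
    · exact add_pos_of_pos_of_nonneg (mul_pos hu hc) (mul_nonneg hw hd.le)
  linarith

def IsCCWOrder (N : ℕ) (p : ZMod N → Pt) : Prop :=
  ∀ i j k : ZMod N, i.val < j.val → j.val < k.val → 0 < det2 (p j - p i) (p k - p i)

namespace IsCCWOrder

variable {N : ℕ} {p : ZMod N → Pt}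

lemma segment_inter_segment_eq_empty (h : IsCCWOrder N p) {a b c d : ZMod N}
    (hab : a.val < b.val) (hbc : b.val < c.val) (hcd : c.val < d.val) :
    segment ℝ (p a) (p b) ∩ segment ℝ (p c) (p d) = ∅ :=
  segment_inter_segment_eq_empty_of_det2_pos (h a b c hab hbc) (h a b d hab (hbc.trans hcd))

lemma comp_add_one [NeZero N] (h : IsCCWOrder N p) : IsCCWOrder N (fun i => p (i + 1)) := by
  intro i j k hij hjk
  have hk := ZMod.val_lt k
  have hone : (1 : ZMod N).val = 1 := ZMod.val_one'' (by omega)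
  have hsucc : ∀ x : ZMod N, x.val < k.val → (x + 1).val = x.val + 1 := fun x hx => by
    rw [ZMod.val_add_of_lt (by omega), hone]
  rcases Nat.lt_or_ge (k.val + 1) N with hk | hk
  · exact h _ _ _ (by rw [hsucc i (hij.trans hjk), hsucc j hjk]; omega)
      (by rw [hsucc j hjk, ZMod.val_add_of_lt (by omega), hone]; omega)
  · have hk0 : k + 1 = 0 := by
      rw [← ZMod.val_eq_zero, ZMod.val_add, hone, show k.val + 1 = N by omega, Nat.mod_self]
    simp only [hk0]
    rw [← det2_sub_cyclic]
    exact h _ _ _ (by rw [ZMod.val_zero, hsucc i (hij.trans hjk)]; omega)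
      (by rw [hsucc i (hij.trans hjk), hsucc j hjk]; omega)

end IsCCWOrder

lemma sin_sub_sub_sin_add_sin (x y : ℝ) :
    sin (y - x) - sin y + sin x = 4 * sin (x / 2) * sin (y / 2) * sin ((y - x) / 2) := by
  obtain ⟨a, rfl⟩ : ∃ a, x = 2 * a := ⟨x / 2, by ring⟩
  obtain ⟨b, rfl⟩ : ∃ b, y = 2 * b := ⟨y / 2, by ring⟩
  rw [show 2 * b - 2 * a = 2 * (b - a) by ring, mul_div_cancel_left₀ _ two_ne_zero,
    mul_div_cancel_left₀ _ two_ne_zero, mul_div_cancel_left₀ _ two_ne_zero,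
    sin_two_mul, sin_two_mul, sin_two_mul, sin_sub, cos_sub]
  linear_combination (2 * sin b * cos b) * sin_sq_add_cos_sq a
    - (2 * sin a * cos a) * sin_sq_add_cos_sq b

lemma min_sin_half_le_sin_half {x y S : ℝ} (hx : 0 ≤ x) (hy : 0 ≤ y) (hxS : x ≤ S)
    (hSy : S ≤ 2 * π - y) : min (sin (x / 2)) (sin (y / 2)) ≤ sin (S / 2) := by
  rcases le_total S π with hS | hS
  · exact (min_le_left _ _).trans
      (sin_le_sin_of_le_of_le_pi_div_two (by linarith [pi_pos]) (by linarith) (by linarith))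
  · rw [← sin_pi_sub (S / 2)]
    exact (min_le_right _ _).trans
      (sin_le_sin_of_le_of_le_pi_div_two (by linarith [pi_pos]) (by linarith) (by linarith))

def circlePt (c : Pt) (r φ : ℝ) : Pt := c + !₂[r * cos φ, r * sin φ]

section Circle

variable {c : Pt} {r : ℝ}

lemma periodic_circlePt : Function.Periodic (circlePt c r) (2 * π) := by
  intro φ; simp only [circlePt, cos_add_two_pi, sin_add_two_pi]

lemma exists_eq_circlePt {v : Pt} (hv : dist v c = r) : ∃ φ, v = circlePt c r φ := by
  set z : ℂ := Complex.orthonormalBasisOneI.repr.symm (v - c)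
  have hz : ‖z‖ = r := by rw [LinearIsometryEquiv.norm_map, ← dist_eq_norm, hv]
  have hvz : v - c = Complex.orthonormalBasisOneI.repr z := by
    rw [LinearIsometryEquiv.apply_symm_apply]
  refine ⟨Complex.arg z, ?_⟩
  ext i
  fin_cases i
  · have := congrArg (· 0) hvz
    simp [circlePt, ← hz, Complex.norm_mul_cos_arg] at this ⊢
    linarith
  · have := congrArg (· 1) hvz
    simp [circlePt, ← hz, Complex.norm_mul_sin_arg] at this ⊢
    linarith

lemma dist_circlePt (hr : 0 ≤ r) (α β : ℝ) :
    dist (circlePt c r α) (circlePt c r β) = 2 * r * |sin ((α - β) / 2)| := by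
  have key : (r * cos α - r * cos β) ^ 2 + (r * sin α - r * sin β) ^ 2
      = (2 * r * |sin ((α - β) / 2)|) ^ 2 := by
    rw [mul_pow, sq_abs, sin_sq_eq_half_sub, mul_div_cancel₀ _ two_ne_zero, cos_sub]
    linear_combination r ^ 2 * (sin_sq_add_cos_sq α + sin_sq_add_cos_sq β)
  rw [EuclideanSpace.dist_eq, Fin.sum_univ_two]
  simp only [circlePt, PiLp.add_apply, Real.dist_eq, sq_abs, Matrix.cons_val_zero,
    Matrix.cons_val_one, add_sub_add_left_eq_sub]
  rw [key, Real.sqrt_sq (by positivity)]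

lemma det2_circlePt (α β γ : ℝ) :
    det2 (circlePt c r β - circlePt c r α) (circlePt c r γ - circlePt c r α)
      = 4 * r ^ 2 * sin ((β - α) / 2) * sin ((γ - α) / 2) * sin ((γ - β) / 2) := by
  have h := sin_sub_sub_sin_add_sin (β - α) (γ - α)
  rw [show γ - α - (β - α) = γ - β by ring, sin_sub, sin_sub, sin_sub] at h
  simp only [det2, circlePt, PiLp.sub_apply, Matrix.cons_val_zero, Matrix.cons_val_one,
    add_sub_add_left_eq_sub]
  linear_combination r ^ 2 * h

lemma lt_of_det2_circlePt_pos {α β γ : ℝ} (hβ : β ∈ Set.Ico α (α + 2 * π))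
    (hγ : γ ∈ Set.Ico α (α + 2 * π))
    (h : 0 < det2 (circlePt c r β - circlePt c r α) (circlePt c r γ - circlePt c r α)) :
    β < γ := by
  rw [det2_circlePt] at h
  have hsβ : 0 ≤ sin ((β - α) / 2) :=
    sin_nonneg_of_nonneg_of_le_pi (by linarith [hβ.1]) (by linarith [hβ.2])
  have hsγ : 0 ≤ sin ((γ - α) / 2) :=
    sin_nonneg_of_nonneg_of_le_pi (by linarith [hγ.1]) (by linarith [hγ.2])
  by_contra! hγβ
  have hs : sin ((γ - β) / 2) ≤ 0 :=
    sin_nonpos_of_nonpos_of_neg_pi_le (by linarith) (by linarith [hβ.2, hγ.1])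
  have := mul_nonpos_of_nonneg_of_nonpos
    (mul_nonneg (mul_nonneg (by positivity : (0 : ℝ) ≤ 4 * r ^ 2) hsβ) hsγ) hs
  linarith

lemma min_dist_circlePt_le (hr : 0 ≤ r) {a a' x b b' w : ℝ} (h₁ : a ≤ a') (h₂ : a' ≤ x)
    (h₃ : x ≤ b) (h₄ : b ≤ b') (h₅ : b' ≤ w) (h₆ : w ≤ a + 2 * π) :
    min (dist (circlePt c r a) (circlePt c r a')) (dist (circlePt c r b) (circlePt c r b'))
      ≤ dist (circlePt c r x) (circlePt c r w) := by
  have habs : ∀ {u v : ℝ}, u ≤ v → v ≤ u + 2 * π → |sin ((v - u) / 2)| = sin ((v - u) / 2) :=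
    fun huv hvu => abs_of_nonneg (sin_nonneg_of_nonneg_of_le_pi (by linarith) (by linarith))
  rw [dist_comm (circlePt c r a), dist_comm (circlePt c r b), dist_comm (circlePt c r x),
    dist_circlePt hr, dist_circlePt hr, dist_circlePt hr, habs h₁ (by linarith),
    habs h₄ (by linarith), habs (by linarith) (by linarith),
    ← mul_min_of_nonneg _ _ (by positivity), min_comm]
  exact mul_le_mul_of_nonneg_left
    (min_sin_half_le_sin_half (by linarith) (by linarith) (by linarith) (by linarith))
    (by positivity)

end Circle

lemma monotone_angle_lift {N : ℕ} {ψ : ZMod N → ℝ} {α : ℝ}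
    (hmono : ∀ i j : ZMod N, i.val ≤ j.val → ψ i ≤ ψ j)
    (hmem : ∀ i, ψ i ∈ Set.Ico α (α + 2 * π)) :
    Monotone fun m : ℕ => ψ m + (m / N : ℕ) * (2 * π) := by
  intro m m' hm
  rcases (Nat.div_le_div_right (c := N) hm).eq_or_lt with hq | hq
  · have hmod : m % N ≤ m' % N := by
      have := Nat.div_add_mod m N
      have := Nat.div_add_mod m' N
      rw [hq] at *
      omega
    simp only [hq]
    gcongr
    exact hmono _ _ (by rwa [ZMod.val_natCast, ZMod.val_natCast])
  · have hq' : ((m / N : ℕ) : ℝ) + 1 ≤ (m' / N : ℕ) := by exact_mod_cast hq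
    have := (hmem m).2
    have := (hmem m').1
    nlinarith [pi_pos]

namespace OnCircleCCW

variable {N : ℕ} {p : ZMod N → Pt}

/-- Angles are lifted from indices in `ZMod N` to `ℕ`, going once around the circle adding `2π`,
so that no edge or gap needs a special case for wrapping around past `p 0`. -/
lemma exists_monotone_angle [NeZero N] (h : OnCircleCCW N p) :
    ∃ (c : Pt) (r : ℝ) (t : ℕ → ℝ), 0 ≤ r ∧ Monotone t ∧ (∀ m, t (m + N) = t m + 2 * π) ∧
      ∀ m : ℕ, p m = circlePt c r (t m) := by
  obtain ⟨⟨c, r, hr, hc⟩, -, hccw⟩ := h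
  choose φ hφ using fun i => exists_eq_circlePt (hc i)
  set ψ : ZMod N → ℝ := fun i => toIcoMod two_pi_pos (φ 0) (φ i)
  have hψ_mem : ∀ i, ψ i ∈ Set.Ico (φ 0) (φ 0 + 2 * π) := fun i => toIcoMod_mem_Ico _ _ _
  have hψ0 : ψ 0 = φ 0 := (toIcoMod_eq_self _).2 ⟨le_rfl, by linarith [two_pi_pos]⟩
  have hpψ : ∀ i, p i = circlePt c r (ψ i) := fun i => by
    rw [hφ i, ← periodic_circlePt.sub_zsmul_eq (toIcoDiv two_pi_pos (φ 0) (φ i)),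
      self_sub_toIcoDiv_zsmul]
  have hψ_mono : ∀ i j : ZMod N, i.val ≤ j.val → ψ i ≤ ψ j := by
    intro i j hij
    rcases hij.eq_or_lt with hij | hij
    · rw [ZMod.val_injective N hij]
    rcases Nat.eq_zero_or_pos i.val with hi | hi
    · rw [(ZMod.val_eq_zero i).1 hi, hψ0]
      exact (hψ_mem j).1
    · have hdet := hccw 0 i j (by rwa [ZMod.val_zero]) hij
      rw [hpψ, hpψ, hpψ, hψ0] at hdet
      exact (lt_of_det2_circlePt_pos (hψ_mem i) (hψ_mem j) hdet).le
  refine ⟨c, r, fun m => ψ m + (m / N : ℕ) * (2 * π), hr.le, monotone_angle_lift hψ_mono hψ_mem,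
    fun m => ?_, fun m => ?_⟩
  · simp only [Nat.cast_add, ZMod.natCast_self, add_zero, Nat.add_div_right m (NeZero.pos N)]
    push_cast
    ring
  · rw [hpψ, (periodic_circlePt.nat_mul (m / N)) (ψ m)]

lemma min_dist_le_dist (h : OnCircleCCW N p) {g₁ u g₂ v : ℕ} (h₁ : g₁ < u) (h₂ : u ≤ g₂)
    (h₃ : g₂ < v) (h₄ : v ≤ g₁ + N) :
    min (dist (p g₁) (p (g₁ + 1))) (dist (p g₂) (p (g₂ + 1))) ≤ dist (p u) (p v) := by
  have : NeZero N := ⟨by omega⟩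
  obtain ⟨c, r, t, hr, ht, hper, hp⟩ := h.exists_monotone_angle
  simp only [← Nat.cast_succ, hp]
  exact min_dist_circlePt_le hr (ht (by omega)) (ht h₁) (ht h₂) (ht (by omega)) (ht h₃)
    ((ht h₄).trans (hper g₁).le)

end OnCircleCCW

lemma exists_apply_notMem_of_odd_card {α : Type*} {s : Finset α} {f : α → α} (hs : Odd s.card)
    (hinv : ∀ a ∈ s, f (f a) = a) (hfix : ∀ a ∈ s, f a ≠ a) : ∃ a ∈ s, f a ∉ s := by
  by_contra! hmem
  have hsum : ∑ _a ∈ s, (1 : ZMod 2) = 0 :=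
    Finset.sum_involution (fun a _ => f a) (fun _ _ => rfl) (fun a ha _ => hfix a ha) hmem hinv
  rw [Finset.sum_const, nsmul_one, ZMod.natCast_eq_zero_iff_even] at hsum
  exact Nat.not_even_iff_odd.2 hs hsum

section ReprAbove

variable {N : ℕ}

def natReprAbove (g : ℕ) (z : ZMod N) : ℕ := g + 1 + (z - ((g + 1 : ℕ) : ZMod N)).val

lemma natCast_natReprAbove [NeZero N] (g : ℕ) (z : ZMod N) :
    ((natReprAbove g z : ℕ) : ZMod N) = z := by
  simp [natReprAbove]

lemma natReprAbove_le [NeZero N] (g : ℕ) (z : ZMod N) : natReprAbove g z ≤ g + N := by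
  have := ZMod.val_lt (z - ((g + 1 : ℕ) : ZMod N))
  unfold natReprAbove
  omega

lemma natReprAbove_natCast {g m : ℕ} (h₁ : g < m) (h₂ : m ≤ g + N) :
    natReprAbove g (m : ZMod N) = m := by
  rw [natReprAbove, ← Nat.cast_sub h₁, ZMod.val_cast_of_lt (by omega)]
  omega

end ReprAbove

lemma exists_crossing_of_odd {N : ℕ} {σ : ZMod N → ZMod N} (hinv : ∀ i, σ (σ i) = i)
    (hfix : ∀ i, σ i ≠ i) {g₁ g₂ : ℕ} (hodd : Odd (g₂ - g₁)) (hg : g₂ ≤ g₁ + N) :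
    ∃ u v : ℕ, g₁ < u ∧ u ≤ g₂ ∧ g₂ < v ∧ v ≤ g₁ + N ∧ σ u = v := by
  have := hodd.pos
  have : NeZero N := ⟨by omega⟩
  -- `σ` read on representatives in `(g₁, g₁ + N]` is a fixed-point-free involution there,
  -- and `(g₁, g₂]` has an odd number of elements.
  obtain ⟨u, hu, hvu⟩ := exists_apply_notMem_of_odd_card (s := Finset.Ioc g₁ g₂)
    (f := fun m => natReprAbove g₁ (σ m)) (by rwa [Nat.card_Ioc])
    (fun m hm => by
      rw [Finset.mem_Ioc] at hm
      simp only [natCast_natReprAbove, hinv, natReprAbove_natCast hm.1 (hm.2.trans hg)])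
    (fun m _ hm => hfix m <| by
      simpa [natCast_natReprAbove] using congrArg (Nat.cast : ℕ → ZMod N) hm)
  rw [Finset.mem_Ioc] at hu hvu
  refine ⟨u, _, hu.1, hu.2, ?_, natReprAbove_le _ _, (natCast_natReprAbove _ _).symm⟩
  unfold natReprAbove at hvu ⊢
  omega

lemma OnCircleCCW.min_dist_le_iSup {N : ℕ} {p : ZMod N → Pt} (h : OnCircleCCW N p)
    {σ : ZMod N → ZMod N} (hinv : ∀ i, σ (σ i) = i) (hfix : ∀ i, σ i ≠ i) {g₁ g₂ : ℕ}
    (hodd : Odd (g₂ - g₁)) (hg : g₂ ≤ g₁ + N) :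
    min (dist (p g₁) (p (g₁ + 1))) (dist (p g₂) (p (g₂ + 1))) ≤ ⨆ i, dist (p i) (p (σ i)) := by
  obtain ⟨u, v, h₁, h₂, h₃, h₄, huv⟩ := exists_crossing_of_odd hinv hfix hodd hg
  have : NeZero N := ⟨by omega⟩
  calc _ ≤ dist (p u) (p v) := h.min_dist_le_dist h₁ h₂ h₃ h₄
    _ = dist (p u) (p (σ u)) := by rw [huv]
    _ ≤ _ := le_ciSup (f := fun i => dist (p i) (p (σ i))) (Set.finite_range _).bddAbove _

def boundaryMatching (n : ℕ) (i : ZMod (2 * n)) : ZMod (2 * n) :=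
  if Even i.val then i + 1 else i - 1

section BoundaryMatching

variable {n : ℕ}

lemma boundaryMatching_two_mul {k : ℕ} (hk : k < n) :
    boundaryMatching n (2 * k : ℕ) = ((2 * k : ℕ) : ZMod (2 * n)) + 1 := by
  rw [boundaryMatching, ZMod.val_cast_of_lt (by omega), if_pos (even_two_mul k)]

lemma boundaryMatching_two_mul_add_one {k : ℕ} (hk : k < n) :
    boundaryMatching n (((2 * k : ℕ) : ZMod (2 * n)) + 1) = (2 * k : ℕ) := by
  rw [boundaryMatching, ← Nat.cast_add_one, ZMod.val_cast_of_lt (by omega),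
    if_neg (Nat.not_even_iff_odd.2 (odd_two_mul_add_one k)), Nat.cast_add_one,
    add_sub_cancel_right]

lemma exists_boundaryMatching_eq [NeZero n] (i : ZMod (2 * n)) :
    ∃ k < n, (i = (2 * k : ℕ) ∧ boundaryMatching n i = ((2 * k : ℕ) : ZMod (2 * n)) + 1) ∨
      (i = ((2 * k : ℕ) : ZMod (2 * n)) + 1 ∧ boundaryMatching n i = (2 * k : ℕ)) := by
  have hi := ZMod.val_lt i
  obtain ⟨k, hk | hk⟩ := Nat.even_or_odd' i.val
  · refine ⟨k, by omega, Or.inl ⟨?_, ?_⟩⟩ <;>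
      rw [← ZMod.natCast_zmod_val i, hk]
    exact boundaryMatching_two_mul (by omega)
  · refine ⟨k, by omega, Or.inr ⟨?_, ?_⟩⟩ <;>
      rw [← ZMod.natCast_zmod_val i, hk, Nat.cast_add_one]
    exact boundaryMatching_two_mul_add_one (by omega)

lemma val_natCast_two_mul {k : ℕ} (hk : k < n) : ((2 * k : ℕ) : ZMod (2 * n)).val = 2 * k :=
  ZMod.val_cast_of_lt (by omega)

lemma val_natCast_two_mul_add_one {k : ℕ} (hk : k < n) :
    (((2 * k : ℕ) : ZMod (2 * n)) + 1).val = 2 * k + 1 := by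
  rw [← Nat.cast_add_one, ZMod.val_cast_of_lt (by omega)]

lemma IsCCWOrder.boundary_segments_disjoint {p : ZMod (2 * n) → Pt} (h : IsCCWOrder (2 * n) p)
    {k l : ℕ} (hkl : k < l) (hl : l < n) :
    segment ℝ (p (2 * k : ℕ)) (p (((2 * k : ℕ) : ZMod (2 * n)) + 1)) ∩
      segment ℝ (p (2 * l : ℕ)) (p (((2 * l : ℕ) : ZMod (2 * n)) + 1)) = ∅ :=
  have hk := hkl.trans hl
  h.segment_inter_segment_eq_empty
    (by rw [val_natCast_two_mul hk, val_natCast_two_mul_add_one hk]; omega)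
    (by rw [val_natCast_two_mul_add_one hk, val_natCast_two_mul hl]; omega)
    (by rw [val_natCast_two_mul hl, val_natCast_two_mul_add_one hl]; omega)

lemma isNCM_boundaryMatching [NeZero n] {p : ZMod (2 * n) → Pt} (h : IsCCWOrder (2 * n) p) :
    IsNCM (2 * n) p (boundaryMatching n) := by
  refine ⟨fun i => ?_, fun i => ?_, fun i j hji hjσ => ?_⟩
  · obtain ⟨k, hk, ⟨rfl, hσ⟩ | ⟨rfl, hσ⟩⟩ := exists_boundaryMatching_eq i
    · rw [hσ, boundaryMatching_two_mul_add_one hk]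
    · rw [hσ, boundaryMatching_two_mul hk]
  · obtain ⟨k, hk, ⟨rfl, hσ⟩ | ⟨rfl, hσ⟩⟩ := exists_boundaryMatching_eq i <;>
    · rw [hσ]
      intro heq
      have := congrArg ZMod.val heq
      rw [val_natCast_two_mul hk, val_natCast_two_mul_add_one hk] at this
      omega
  have hseg : ∀ (x : ZMod (2 * n)) (k : ℕ),
      (x = (2 * k : ℕ) ∧ boundaryMatching n x = ((2 * k : ℕ) : ZMod (2 * n)) + 1) ∨
        (x = ((2 * k : ℕ) : ZMod (2 * n)) + 1 ∧ boundaryMatching n x = (2 * k : ℕ)) →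
      segment ℝ (p x) (p (boundaryMatching n x))
        = segment ℝ (p (2 * k : ℕ)) (p (((2 * k : ℕ) : ZMod (2 * n)) + 1)) := by
    rintro x k (⟨rfl, hσ⟩ | ⟨rfl, hσ⟩) <;> rw [hσ]
    exact segment_symm _ _ _
  obtain ⟨k, hk, hi⟩ := exists_boundaryMatching_eq i
  obtain ⟨l, hl, hj⟩ := exists_boundaryMatching_eq j
  rw [hseg i k hi, hseg j l hj]
  rcases lt_trichotomy k l with hkl | rfl | hkl
  · exact h.boundary_segments_disjoint hkl hl
  · rcases hi with ⟨rfl, hσ⟩ | ⟨rfl, hσ⟩ <;> rcases hj with ⟨rfl, -⟩ | ⟨rfl, -⟩ <;> simp_all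
  · rw [Set.inter_comm]
    exact h.boundary_segments_disjoint hkl hk

lemma iSup_dist_boundaryMatching [NeZero n] (p : ZMod (2 * n) → Pt) :
    ⨆ i, dist (p i) (p (boundaryMatching n i))
      = ⨆ k : Fin n, dist (p ((2 * (k : ℕ) : ℕ) : ZMod (2 * n)))
          (p (((2 * (k : ℕ) : ℕ) : ZMod (2 * n)) + 1)) := by
  refine le_antisymm (ciSup_le fun i => ?_) (ciSup_le fun k => ?_)
  · obtain ⟨k, hk, ⟨rfl, hσ⟩ | ⟨rfl, hσ⟩⟩ := exists_boundaryMatching_eq i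
    · rw [hσ]
      exact le_ciSup_of_le (Set.finite_range _).bddAbove ⟨k, hk⟩ le_rfl
    · rw [hσ, dist_comm]
      exact le_ciSup_of_le (Set.finite_range _).bddAbove ⟨k, hk⟩ le_rfl
  · exact le_ciSup_of_le (Set.finite_range _).bddAbove _
      (by rw [boundaryMatching_two_mul k.2])

end BoundaryMatching

lemma IsNCM.conj_add {N : ℕ} {p : ZMod N → Pt} {σ : ZMod N → ZMod N} {a : ZMod N}
    (h : IsNCM N (fun i => p (i + a)) σ) : IsNCM N p (fun i => σ (i - a) + a) := by
  obtain ⟨hinv, hfix, hdisj⟩ := h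
  refine ⟨fun i => by simp [hinv], fun i hi => hfix (i - a) (eq_sub_of_add_eq hi),
    fun i j hji hjσ => ?_⟩
  simpa using hdisj (i - a) (j - a) (sub_left_injective.ne hji)
    (fun h => hjσ (eq_add_of_sub_eq h))

lemma iSup_dist_conj_add {N : ℕ} (p : ZMod N → Pt) (σ : ZMod N → ZMod N) (a : ZMod N) :
    ⨆ i, dist (p i) (p (σ (i - a) + a)) = ⨆ i, dist (p (i + a)) (p (σ i + a)) := by
  rw [← (Equiv.addRight a).iSup_comp]
  simp

lemma min_iSup_le_of_forall {α ι κ : Type*} [ConditionallyCompleteLinearOrder α] [Finite ι]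
    [Nonempty ι] [Finite κ] [Nonempty κ] {f : ι → α} {g : κ → α} {c : α}
    (h : ∀ i j, min (f i) (g j) ≤ c) : min (⨆ i, f i) (⨆ j, g j) ≤ c := by
  obtain ⟨i, hi⟩ := exists_eq_ciSup_of_finite (f := f)
  obtain ⟨j, hj⟩ := exists_eq_ciSup_of_finite (f := g)
  rw [← hi, ← hj]
  exact h i j

/-- For `2n` distinct points on a common circle in counterclockwise order, the
minimum over all perfect non-crossing matchings of the maximum edge length equals the smaller
of the two values obtained from the two perfect matchings consisting only of boundary edges. -/
theorem minmax_eq_min_of_two_boundary_matchings (n : ℕ) (hn : 0 < n) (p : ZMod (2 * n) → Pt)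
    (hccw : OnCircleCCW (2 * n) p) :
    IsLeast {val : ℝ | ∃ σ, IsNCM (2 * n) p σ ∧ val = ⨆ i, dist (p i) (p (σ i))}
      (min
        (⨆ k : Fin n, dist (p ((2 * (k : ℕ) : ℕ) : ZMod (2 * n)))
          (p (((2 * (k : ℕ) : ℕ) : ZMod (2 * n)) + 1)))
        (⨆ k : Fin n, dist (p ((2 * (k : ℕ) + 1 : ℕ) : ZMod (2 * n)))
          (p (((2 * (k : ℕ) + 1 : ℕ) : ZMod (2 * n)) + 1)))) := by
  have : NeZero n := ⟨hn.ne'⟩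
  have hord : IsCCWOrder (2 * n) p := hccw.2.2
  refine ⟨min_rec' (· ∈ _)
    ⟨_, isNCM_boundaryMatching hord, (iSup_dist_boundaryMatching p).symm⟩
    -- the matching by the edges `{2k+1, 2k+2}` is `boundaryMatching n` rotated by one
    ⟨_, (isNCM_boundaryMatching hord.comp_add_one).conj_add, ?_⟩, ?_⟩
  · rw [iSup_dist_conj_add, iSup_dist_boundaryMatching (fun i => p (i + 1))]
    push_cast
    rfl
  · rintro _ ⟨σ, ⟨hinv, hfix, -⟩, rfl⟩
    refine min_iSup_le_of_forall fun a b => ?_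
    rcases lt_or_gt_of_ne (show 2 * (a : ℕ) ≠ 2 * b + 1 by omega) with hab | hab
    · exact hccw.min_dist_le_iSup hinv hfix ⟨b - a, by omega⟩ (by omega)
    · rw [min_comm]
      exact hccw.min_dist_le_iSup hinv hfix ⟨a - b - 1, by omega⟩ (by omega)
end
end

section
/- Let p_0, p_1, …, p_{2n−1} be 2n distinct points on a common circle in counterclockwise order. Then the minimum, over all perfect non-crossing matchings M of the points, of the minimum edge length of M equals the minimum of dist(p_i, p_{i+1}) over all i ∈ {0,1,…,2n−1} (indices modulo 2n), i.e., the shortest feasible edge is the shortest boundary edge. -/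
noncomputable section

section lemmas

lemma det2_cyc (x y z : Pt) : det2 (y - x) (z - x) = det2 (z - y) (x - y) := by
  simp only [det2, PiLp.sub_apply]; ring

lemma det2_skew (u v : Pt) : det2 u v = -det2 v u := by simp only [det2]; ring

lemma dist_sq_coords (x y : Pt) : dist x y ^ 2 = (x 0 - y 0)^2 + (x 1 - y 1)^2 := by
  rw [EuclideanSpace.dist_eq, Real.sq_sqrt (by positivity)]
  simp [Fin.sum_univ_two, Real.dist_eq, sq_abs]

lemma dist_le_of_sq (x y z w : Pt)
    (h : (x 0 - y 0)^2 + (x 1 - y 1)^2 ≤ (z 0 - w 0)^2 + (z 1 - w 1)^2) :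
    dist x y ≤ dist z w := by
  have h1 := dist_sq_coords x y
  have h2 := dist_sq_coords z w
  nlinarith [dist_nonneg (x := x) (y := y), dist_nonneg (x := z) (y := w)]

lemma circle_coords (x c : Pt) (r : ℝ) (h : dist x c = r) :
    (x 0 - c 0)^2 + (x 1 - c 1)^2 = r^2 := by
  rw [← dist_sq_coords, h]

lemma key_alg (a0 a1 c0 c1 x0 x1 y0 y1 o0 o1 r : ℝ)
    (hA : (a0-o0)^2+(a1-o1)^2 = r^2) (hC : (c0-o0)^2+(c1-o1)^2 = r^2)
    (hX : (x0-o0)^2+(x1-o1)^2 = r^2) (hY : (y0-o0)^2+(y1-o1)^2 = r^2)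
    (hgx : (c0-a0)*(x1-a1)-(c1-a1)*(x0-a0) < 0)
    (hgy : 0 < (c0-a0)*(y1-a1)-(c1-a1)*(y0-a0)) :
    (a0-x0)*(c0-x0)+(a1-x1)*(c1-x1) ≤ 0 ∨ (a0-y0)*(c0-y0)+(a1-y1)*(c1-y1) ≤ 0 := by
  by_contra h
  push_neg at h
  obtain ⟨h1, h2⟩ := h
  have key : ((a0-x0)*(c0-x0)+(a1-x1)*(c1-x1)) * ((c0-a0)*(y1-a1)-(c1-a1)*(y0-a0))
      = ((a0-y0)*(c0-y0)+(a1-y1)*(c1-y1)) * ((c0-a0)*(x1-a1)-(c1-a1)*(x0-a0)) := by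
    linear_combination ((c0-a0)*(y1-a1)-(c1-a1)*(y0-a0)) * (hX - hA)
      - ((c0-a0)*(x1-a1)-(c1-a1)*(x0-a0)) * (hY - hA)
      + ((x0-a0)*(y1-a1)-(x1-a1)*(y0-a0)) * (hA - hC)
  nlinarith [mul_pos h1 hgy,
    mul_pos_of_neg_of_neg hgx (show -((a0-y0)*(c0-y0)+(a1-y1)*(c1-y1)) < 0 by linarith)]

lemma chord_ge_aux (n : ℕ) (hn : 0 < n) (p : ZMod (2*n) → Pt) (hccw : OnCircleCCW (2*n) p)
    (a b : ZMod (2*n)) (hv : a.val < b.val) :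
    ∃ k, dist (p k) (p (k+1)) ≤ dist (p a) (p b) := by
  haveI : NeZero (2*n) := ⟨by omega⟩
  haveI : Fact (1 < 2*n) := ⟨by omega⟩
  obtain ⟨⟨c, r, hr, hcirc⟩, hinj, hdet⟩ := hccw
  have hblt : b.val < 2*n := ZMod.val_lt b
  by_cases h1 : b.val = a.val + 1
  · refine ⟨a, le_of_eq ?_⟩
    have hb : b = a + 1 := by
      have : ((b.val : ℕ) : ZMod (2*n)) = ((a.val + 1 : ℕ) : ZMod (2*n)) := by rw [h1]
      rwa [ZMod.natCast_zmod_val, Nat.cast_add, Nat.cast_one, ZMod.natCast_zmod_val] at this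
    rw [hb]
  by_cases h2 : a.val = 0 ∧ b.val = 2*n - 1
  · refine ⟨b, le_of_eq ?_⟩
    have ha0 : a = 0 := by
      have : ((a.val : ℕ) : ZMod (2*n)) = ((0 : ℕ) : ZMod (2*n)) := by rw [h2.1]
      rwa [ZMod.natCast_zmod_val, Nat.cast_zero] at this
    have hb1 : b + 1 = a := by
      have hbv : b.val + 1 = 2*n := by omega
      have hcast : b + 1 = ((b.val + 1 : ℕ) : ZMod (2*n)) := by
        rw [Nat.cast_add, Nat.cast_one, ZMod.natCast_zmod_val]
      rw [hcast, hbv, ZMod.natCast_self, ha0]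
    rw [hb1, dist_comm]
  · have hb2 : a.val + 2 ≤ b.val := by omega
    have ha1v : (a+1).val = a.val + 1 := by
      rw [ZMod.val_add, ZMod.val_one]
      exact Nat.mod_eq_of_lt (by omega)
    have hgx : det2 (p b - p a) (p (a+1) - p a) < 0 := by
      have h := hdet a (a+1) b (by omega) (by omega)
      rw [det2_skew] at h
      linarith
    have hgy : 0 < det2 (p b - p a) (p (b+1) - p a) := by
      by_cases hbtop : b.val = 2*n - 1
      · have hb1v : (b+1).val = 0 := by
          rw [ZMod.val_add, ZMod.val_one]
          have : b.val + 1 = 2*n := by omega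
          rw [this, Nat.mod_self]
        have ha0 : 0 < a.val := by
          rcases Nat.eq_zero_or_pos a.val with h | h
          · exact absurd ⟨h, hbtop⟩ h2
          · exact h
        have h := hdet (b+1) a b (by omega) hv
        exact (det2_cyc (p (b+1)) (p a) (p b)) ▸ h
      · have hb1v : (b+1).val = b.val + 1 := by
          rw [ZMod.val_add, ZMod.val_one]
          exact Nat.mod_eq_of_lt (by omega)
        exact hdet a b (b+1) hv (by omega)
    have HA := circle_coords (p a) c r (hcirc a)
    have HC := circle_coords (p b) c r (hcirc b)
    have HX := circle_coords (p (a+1)) c r (hcirc (a+1))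
    have HY := circle_coords (p (b+1)) c r (hcirc (b+1))
    simp only [det2, PiLp.sub_apply] at hgx hgy
    rcases key_alg (p a 0) (p a 1) (p b 0) (p b 1) (p (a+1) 0) (p (a+1) 1)
      (p (b+1) 0) (p (b+1) 1) (c 0) (c 1) r HA HC HX HY hgx hgy with h | h
    · exact ⟨a, dist_le_of_sq _ _ _ _ (by nlinarith)⟩
    · exact ⟨b, dist_le_of_sq _ _ _ _ (by nlinarith)⟩

lemma chord_ge (n : ℕ) (hn : 0 < n) (p : ZMod (2*n) → Pt) (hccw : OnCircleCCW (2*n) p)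
    (a b : ZMod (2*n)) (hab : a ≠ b) :
    ∃ k, dist (p k) (p (k+1)) ≤ dist (p a) (p b) := by
  haveI : NeZero (2*n) := ⟨by omega⟩
  rcases lt_trichotomy a.val b.val with h | h | h
  · exact chord_ge_aux n hn p hccw a b h
  · exact absurd (ZMod.val_injective _ h) hab
  · obtain ⟨k, hk⟩ := chord_ge_aux n hn p hccw b a h
    exact ⟨k, by rwa [dist_comm (p a) (p b)]⟩

lemma hadj (n : ℕ) (hn : 0 < n) (p : ZMod (2*n) → Pt) (hccw : OnCircleCCW (2*n) p)
    (i l : ZMod (2*n)) (h1 : l ≠ i) (h2 : l ≠ i + 1) :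
    0 < det2 (p (i+1) - p i) (p l - p i) := by
  haveI : NeZero (2*n) := ⟨by omega⟩
  haveI : Fact (1 < 2*n) := ⟨by omega⟩
  obtain ⟨-, hinj, hdet⟩ := hccw
  have hne : ∀ x y : ZMod (2*n), x ≠ y → x.val ≠ y.val :=
    fun x y h hh => h (ZMod.val_injective _ hh)
  have hilt : i.val < 2*n := ZMod.val_lt i
  have hllt : l.val < 2*n := ZMod.val_lt l
  by_cases hitop : i.val = 2*n - 1
  · have hi1v : (i+1).val = 0 := by
      rw [ZMod.val_add, ZMod.val_one]
      have : i.val + 1 = 2*n := by omega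
      rw [this, Nat.mod_self]
    have hl0 : l.val ≠ 0 := by have := hne l (i+1) h2; omega
    have hltop : l.val ≠ 2*n - 1 := by have := hne l i h1; omega
    have h := hdet (i+1) l i (by omega) (by omega)
    rw [det2_cyc]
    exact h
  · have hi1v : (i+1).val = i.val + 1 := by
      rw [ZMod.val_add, ZMod.val_one]
      exact Nat.mod_eq_of_lt (by omega)
    have hli : l.val ≠ i.val := hne l i h1
    have hli1 : l.val ≠ i.val + 1 := by have := hne l (i+1) h2; omega
    rcases lt_or_gt_of_ne hli with h | h
    · have hh := hdet l i (i+1) h (by omega)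
      exact (det2_cyc (p l) (p i) (p (i+1))) ▸ hh
    · exact hdet i (i+1) l (by omega) (by omega)

lemma det2_seg (w s y z : Pt) (u v : ℝ) (huv : u + v = 1) :
    det2 w ((u • y + v • z) - s) = u * det2 w (y - s) + v * det2 w (z - s) := by
  have hv : v = 1 - u := by linarith
  subst hv
  simp only [det2, PiLp.sub_apply, PiLp.add_apply, PiLp.smul_apply, smul_eq_mul]
  ring

lemma seg_disj (n : ℕ) (hn : 0 < n) (p : ZMod (2*n) → Pt) (hccw : OnCircleCCW (2*n) p)
    (k l : ZMod (2*n)) (h0 : l ≠ k) (h1 : l ≠ k + 1) (h2 : l + 1 ≠ k) :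
    segment ℝ (p k) (p (k+1)) ∩ segment ℝ (p l) (p (l+1)) = ∅ := by
  have d1 : 0 < det2 (p (k+1) - p k) (p l - p k) := hadj n hn p hccw k l h0 h1
  have d2 : 0 < det2 (p (k+1) - p k) (p (l+1) - p k) :=
    hadj n hn p hccw k (l+1) h2 (fun h => h0 (add_right_cancel h))
  rw [Set.eq_empty_iff_forall_notMem]
  rintro x ⟨hx1, hx2⟩
  obtain ⟨u, v, hu, hv, huv, hx⟩ := hx1
  obtain ⟨u', v', hu', hv', huv', hx'⟩ := hx2
  have e1 : det2 (p (k+1) - p k) (x - p k) = 0 := by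
    rw [← hx, det2_seg _ _ _ _ _ _ huv]
    have t1 : det2 (p (k+1) - p k) (p k - p k) = 0 := by
      simp only [det2, PiLp.sub_apply]; ring
    have t2 : det2 (p (k+1) - p k) (p (k+1) - p k) = 0 := by
      simp only [det2, PiLp.sub_apply]; ring
    rw [t1, t2]; ring
  have e2 : 0 < det2 (p (k+1) - p k) (x - p k) := by
    rw [← hx', det2_seg _ _ _ _ _ _ huv']
    rcases eq_or_lt_of_le hu' with h | h
    · have hv1 : v' = 1 := by linarith
      rw [← h, hv1]; linarith
    · nlinarith [mul_pos h d1, mul_nonneg hv' d2.le]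
  linarith

end lemmas

/-- For `2n` distinct points on a common circle in counterclockwise order,
the minimum over all perfect non-crossing matchings of the minimum edge length equals the
length of the shortest boundary edge. -/
theorem minmin_eq_shortest_boundary_edge (n : ℕ) (hn : 0 < n) (p : ZMod (2 * n) → Pt)
    (hccw : OnCircleCCW (2 * n) p) :
    IsLeast {val : ℝ | ∃ σ, IsNCM (2 * n) p σ ∧ val = ⨅ i, dist (p i) (p (σ i))}
      (⨅ i : ZMod (2 * n), dist (p i) (p (i + 1))) := by
  haveI : NeZero (2*n) := ⟨by omega⟩
  haveI : Fact (1 < 2*n) := ⟨by omega⟩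
  have bdd : BddBelow (Set.range fun i : ZMod (2*n) => dist (p i) (p (i+1))) :=
    ⟨0, by rintro x ⟨i, rfl⟩; exact dist_nonneg⟩
  obtain ⟨m, hm⟩ := Finite.exists_min (fun i : ZMod (2*n) => dist (p i) (p (i+1)))
  set σ : ZMod (2*n) → ZMod (2*n) := fun i => if (i - m).val % 2 = 0 then i + 1 else i - 1
    with hσdef
  have par : ∀ x : ZMod (2*n), (x + 1).val % 2 = (x.val + 1) % 2 := by
    intro x
    rw [ZMod.val_add, ZMod.val_one]
    exact Nat.mod_mod_of_dvd _ (Dvd.intro n rfl)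
  have parflip : ∀ i : ZMod (2*n), ((i + 1) - m).val % 2 ≠ (i - m).val % 2 := by
    intro i
    have h2 : (i + 1) - m = (i - m) + 1 := by ring
    have h3 := par (i - m)
    rw [h2, h3]
    omega
  have parflip' : ∀ i : ZMod (2*n), ((i - 1) - m).val % 2 ≠ (i - m).val % 2 := by
    intro i
    have := parflip (i - 1)
    rw [sub_add_cancel] at this
    exact fun h => this h.symm
  have hσeven : ∀ i, (i - m).val % 2 = 0 → σ i = i + 1 := fun i h => if_pos h
  have hσodd : ∀ i, (i - m).val % 2 ≠ 0 → σ i = i - 1 := fun i h => if_neg h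
  have hinv : ∀ i, σ (σ i) = i := by
    intro i
    by_cases h : (i - m).val % 2 = 0
    · rw [hσeven i h, hσodd (i+1) (by have := parflip i; omega), add_sub_cancel_right]
    · rw [hσodd i h, hσeven (i-1) (by have := parflip' i; omega), sub_add_cancel]
  have hfix : ∀ i, σ i ≠ i := by
    intro i
    by_cases h : (i - m).val % 2 = 0
    · rw [hσeven i h]
      intro hh
      exact one_ne_zero (add_eq_left.mp hh)
    · rw [hσodd i h]
      intro hh
      exact one_ne_zero (sub_eq_self.mp hh)
  have hcross : ∀ i j : ZMod (2*n), j ≠ i → j ≠ σ i →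
      segment ℝ (p i) (p (σ i)) ∩ segment ℝ (p j) (p (σ j)) = ∅ := by
    intro i j hji hjσ
    have e1 : ∀ x : ZMod (2*n), p x = p ((x - 1) + 1) := by intro x; rw [sub_add_cancel]
    by_cases hi : (i - m).val % 2 = 0 <;> by_cases hj : (j - m).val % 2 = 0
    · -- both even
      rw [hσeven i hi, hσeven j hj]
      refine seg_disj n hn p hccw i j hji (by rwa [hσeven i hi] at hjσ) ?_
      intro h
      have := parflip j
      rw [h] at this
      omega
    · -- i even, j odd
      rw [hσeven i hi, hσodd j hj, segment_symm ℝ (p j) (p (j-1)), e1 j]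
      refine seg_disj n hn p hccw i (j-1) ?_ ?_ ?_
      · intro h
        apply hjσ
        rw [hσeven i hi, ← h, sub_add_cancel]
      · intro h
        have h2 := parflip' j
        rw [h] at h2
        have h3 := parflip i
        omega
      · rw [sub_add_cancel]; exact hji
    · -- i odd, j even
      rw [hσodd i hi, segment_symm ℝ (p i) (p (i-1)), e1 i, hσeven j hj]
      refine seg_disj n hn p hccw (i-1) j ?_ ?_ ?_
      · intro h; apply hjσ; rw [hσodd i hi, h]
      · rw [sub_add_cancel]; exact hji
      · intro h
        have h2 := parflip j
        rw [h] at h2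
        have h3 := parflip' i
        omega
    · -- both odd
      rw [hσodd i hi, segment_symm ℝ (p i) (p (i-1)), e1 i,
        hσodd j hj, segment_symm ℝ (p j) (p (j-1)), e1 j]
      refine seg_disj n hn p hccw (i-1) (j-1) ?_ ?_ ?_
      · intro h
        apply hji
        have := congrArg (· + 1) h
        simpa [sub_add_cancel] using this
      · rw [sub_add_cancel]
        intro h
        have h2 := parflip' j
        rw [h] at h2
        omega
      · rw [sub_add_cancel]
        intro h
        apply hjσ
        rw [hσodd i hi, h]
  constructor
  · refine ⟨σ, ⟨hinv, hfix, hcross⟩, ?_⟩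
    have bddσ : BddBelow (Set.range fun i : ZMod (2*n) => dist (p i) (p (σ i))) :=
      ⟨0, by rintro x ⟨i, rfl⟩; exact dist_nonneg⟩
    have hσm : σ m = m + 1 := hσeven m (by rw [sub_self, ZMod.val_zero])
    apply le_antisymm
    · apply le_ciInf
      intro i
      by_cases h : (i - m).val % 2 = 0
      · rw [hσeven i h]
        exact ciInf_le bdd i
      · rw [hσodd i h, dist_comm, show p i = p ((i-1)+1) from by rw [sub_add_cancel]]
        exact ciInf_le bdd (i-1)
    · have h1 : (⨅ i, dist (p i) (p (σ i))) ≤ dist (p m) (p (m+1)) := by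
        have := ciInf_le bddσ m
        rwa [hσm] at this
      exact h1.trans (le_ciInf hm)
  · rintro val ⟨σ', hσ', rfl⟩
    apply le_ciInf
    intro j
    obtain ⟨k, hk⟩ := chord_ge n hn p hccw j (σ' j) (Ne.symm (hσ'.2.1 j))
    exact le_trans (ciInf_le bdd k) hk
end
end

section
/- Let P = B ∪ R be a doubly collinear point set with |B| = |R| = n, and let l_B' be one of the two half-lines of l_B (a connected component of l_B \ {x}). Let r, r' ∈ R be such that r lies strictly between x and r' on l_R. Suppose b ∈ B ∩ l_B' minimizes dist(r, ·) among all points of B ∩ l_B' forming a feasible edge with r, and b' ∈ B ∩ l_B' minimizes dist(r', ·) among all points of B ∩ l_B' forming a feasible edge with r'. Then b' = b or b lies strictly between x and b' on l_B. -/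
noncomputable section

open scoped InnerProductSpace

/-- The open half-line starting at `x` with direction `u`. -/
def halfLine (x u : Pt) : Set Pt := {y | ∃ t : ℝ, 0 < t ∧ y = x + t • u}

/-- The open half-line starting at `a` and passing through `c` (it contains `c`). -/
def rayThrough (a c : Pt) : Set Pt := {y | ∃ s : ℝ, 0 < s ∧ y = a + s • (c - a)}

/-- `σ` encodes a bichromatic perfect non-crossing matching of the blue points `B` and the red
points `R`: it restricts to a bijection from `R` onto `B`, and the closed segments induced by
two distinct edges are disjoint. -/
def IsBM (B R : Finset Pt) (σ : Pt → Pt) : Prop :=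
  Set.BijOn σ (↑R) (↑B) ∧
  (∀ r ∈ R, ∀ r' ∈ R, r ≠ r' →
    segment ℝ r (σ r) ∩ segment ℝ r' (σ r') = ∅)

/-- The bichromatic edge `{r, b}` is feasible: some bichromatic perfect non-crossing matching
of `B ∪ R` contains it. -/
def BFeasible (B R : Finset Pt) (r b : Pt) : Prop :=
  ∃ σ, IsBM B R σ ∧ σ r = b

/-!
Orient the two lines so that `b`, `b'` and `r'` lie on the positive half-lines. For `r` and `b`
on the positive half-lines, let `α` (resp. `β`) count the red (blue) points strictly between `x`
and `r` (`b`), and `q` (`Q`) the red (blue) points on the negative half-line. Then `r b` is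
feasible iff `α ≤ β + Q` and `β ≤ α + q`: the reds nearer than `r` must be matched to blues
nearer than `b` or on the other side, as otherwise two edges cross; conversely, repeatedly
matching a pair of points innermost on their half-lines never creates a crossing, and the
counts tell which pair to take.

If `b'` were nearer to `x` than `b`, these inequalities for `r b` and `r' b'` imply them for
`r b'` and `r' b`. By minimality `dist r b ≤ dist r b'` and `dist r' b' ≤ dist r' b`, while
`dist x b' < dist x b`; as `p ↦ dist p b' ^ 2 - dist p b ^ 2` is affine, this is impossible at
`r ∈ (x, r')`.
-/

open scoped Finset

lemma eq_zero_of_mul_eq_mul_of_mul_nonpos {a b t t' : ℝ} (ha : 0 ≤ a) (hb : 0 ≤ b)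
    (ht : t ≠ 0) (ht' : t' ≠ 0) (htt' : t * t' ≤ 0) (h : a * t = b * t') : a = 0 ∧ b = 0 := by
  have hsq : (a * t) ^ 2 ≤ 0 :=
    calc (a * t) ^ 2 = (a * b) * (t * t') := by rw [sq]; nth_rewrite 2 [h]; ring
      _ ≤ 0 := mul_nonpos_of_nonneg_of_nonpos (mul_nonneg ha hb) htt'
  have hat : a * t = 0 := pow_eq_zero_iff two_ne_zero |>.1 (le_antisymm hsq (sq_nonneg _))
  rw [hat, eq_comm, mul_eq_zero] at h
  exact ⟨(mul_eq_zero.1 hat).resolve_right ht, h.resolve_right ht'⟩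

lemma abs_ne_abs_of_ne_of_mul_pos {t t' : ℝ} (h : t ≠ t') (hpos : 0 < t * t') : |t| ≠ |t'| := by
  intro habs
  rcases abs_eq_abs.1 habs with h' | h'
  · exact h h'
  · subst h'; nlinarith [sq_nonneg t']

lemma add_smul_mem_openSegment {E : Type*} [AddCommGroup E] [Module ℝ E] (x u : E) {s s' : ℝ}
    (hs : 0 < s) (hss' : s < s') : x + s • u ∈ openSegment ℝ x (x + s' • u) := by
  rw [openSegment_eq_image']
  refine ⟨s / s', ⟨div_pos hs (hs.trans hss'), (div_lt_one (hs.trans hss')).2 hss'⟩, ?_⟩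
  simp only [add_sub_cancel_left, smul_smul, div_mul_cancel₀ _ (hs.trans hss').ne']

lemma exists_eq_add_smul_of_mem_openSegment {E : Type*} [AddCommGroup E] [Module ℝ E]
    {x v y : E} {t : ℝ} (hy : y ∈ openSegment ℝ x (x + t • v)) :
    ∃ θ ∈ Set.Ioo (0 : ℝ) 1, y = x + (θ * t) • v := by
  rw [openSegment_eq_image'] at hy
  obtain ⟨θ, hθ, rfl⟩ := hy
  exact ⟨θ, hθ, by simp only [add_sub_cancel_left, smul_smul]⟩

lemma segment_inter_segment_nonempty {E : Type*} [AddCommGroup E] [Module ℝ E] (x u v : E)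
    {t t' s s' : ℝ} (ht : 0 < t) (htt' : t < t') (hs' : 0 < s') (hss' : s' < s) :
    (segment ℝ (x + t • v) (x + s • u) ∩ segment ℝ (x + t' • v) (x + s' • u)).Nonempty := by
  -- the segments lie on the lines `a / t + b / s = 1` and `a / t' + b / s' = 1` in the
  -- coordinates `x + a • v + b • u`; they meet at parameter `l` on the first, `m` on the second
  set d := s * t' - s' * t with hd_def
  have hd : 0 < d := by nlinarith
  set l := s' * (t' - t) / d
  set m := s * (t' - t) / d
  have hl : l ∈ Set.Icc (0 : ℝ) 1 :=
    ⟨div_nonneg (mul_nonneg hs'.le (by linarith)) hd.le, by rw [div_le_one hd]; nlinarith⟩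
  have hm : m ∈ Set.Icc (0 : ℝ) 1 :=
    ⟨div_nonneg (mul_nonneg (by linarith) (by linarith)) hd.le, by rw [div_le_one hd]; nlinarith⟩
  have hv : (1 - m) * t' = (1 - l) * t := by
    simp only [l, m]; field_simp; rw [hd_def]; ring
  have hu : m * s' = l * s := by
    simp only [l, m]; field_simp
  refine ⟨x + ((1 - l) * t) • v + (l * s) • u, ?_, ?_⟩
  · rw [segment_eq_image]
    exact ⟨l, hl, by simp only [smul_add, smul_smul]; module⟩
  · rw [segment_eq_image, ← hv, ← hu]
    exact ⟨m, hm, by simp only [smul_add, smul_smul]; module⟩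

lemma dist_lt_dist_of_mem_openSegment {E : Type*} [NormedAddCommGroup E] [InnerProductSpace ℝ E]
    {x y z b b' : E} (hz : z ∈ openSegment ℝ x y) (hx : dist x b' < dist x b)
    (hy : dist y b' ≤ dist y b) : dist z b' < dist z b := by
  have key (p : E) : dist p b' ^ 2 - dist p b ^ 2 = 2 * ⟪p, b - b'⟫_ℝ + (‖b'‖ ^ 2 - ‖b‖ ^ 2) := by
    rw [dist_eq_norm, dist_eq_norm, norm_sub_sq_real, norm_sub_sq_real, inner_sub_right]; ring
  obtain ⟨a, c, ha, hc, hac, rfl⟩ := hz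
  have hx' := key x
  have hy' := key y
  have hz' := key (a • x + c • y)
  rw [inner_add_left, real_inner_smul_left, real_inner_smul_left] at hz'
  have hx2 : dist x b' ^ 2 < dist x b ^ 2 := pow_lt_pow_left₀ hx dist_nonneg two_ne_zero
  have hy2 : dist y b' ^ 2 ≤ dist y b ^ 2 := pow_le_pow_left₀ dist_nonneg hy 2
  refine lt_of_pow_lt_pow_left₀ 2 dist_nonneg ?_
  have : a * (‖b'‖ ^ 2 - ‖b‖ ^ 2) + c * (‖b'‖ ^ 2 - ‖b‖ ^ 2) = ‖b'‖ ^ 2 - ‖b‖ ^ 2 := by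
    rw [← add_mul, hac, one_mul]
  nlinarith [mul_lt_mul_of_pos_left hx2 ha, mul_le_mul_of_nonneg_left hy2 hc.le]

section counts
variable {α : Type*} (c : α → ℝ) (A : Finset α)

def nearerCount (y : α) : ℕ := #{z ∈ A | 0 < c z ∧ c z < c y}

def negCount : ℕ := #{z ∈ A | c z < 0}

/-- `a` is nearest to the origin among the points of `A` on its side. -/
def IsInnermost (a : α) : Prop := ∀ z ∈ A, 0 < c a * c z → |c a| ≤ |c z|

variable {c A}

lemma nearerCount_lt_nearerCount {y y' : α} (hy : y ∈ A) (h0 : 0 < c y) (h : c y < c y') :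
    nearerCount c A y < nearerCount c A y' := by
  refine Finset.card_lt_card ((Finset.ssubset_iff_of_subset ?_).2 ⟨y, ?_, ?_⟩)
  · intro z hz
    simp only [Finset.mem_filter] at hz ⊢
    exact ⟨hz.1, hz.2.1, hz.2.2.trans h⟩
  · simp [hy, h0, h]
  · simp

lemma nearerCount_eq_zero_iff {y : α} :
    nearerCount c A y = 0 ↔ ∀ z ∈ A, 0 < c z → c y ≤ c z := by
  simp [nearerCount, Finset.filter_eq_empty_iff]

lemma nearerCount_erase [DecidableEq α] {y z : α} (hz : z ∈ A) (h0 : 0 < c z) (h : c z < c y) :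
    nearerCount c (A.erase z) y + 1 = nearerCount c A y := by
  rw [nearerCount, nearerCount, Finset.filter_erase,
    Finset.card_erase_add_one (by simp [hz, h0, h])]

lemma nearerCount_erase_of_neg [DecidableEq α] {y z : α} (h : c z < 0) :
    nearerCount c (A.erase z) y = nearerCount c A y := by
  rw [nearerCount, nearerCount, Finset.filter_erase,
    Finset.erase_eq_of_notMem (by simp [h.le.not_gt])]

lemma negCount_erase [DecidableEq α] {z : α} (hz : z ∈ A) (h : c z < 0) :
    negCount c (A.erase z) + 1 = negCount c A := by
  rw [negCount, negCount, Finset.filter_erase, Finset.card_erase_add_one (by simp [hz, h])]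

lemma negCount_erase_of_pos [DecidableEq α] {z : α} (h : 0 < c z) :
    negCount c (A.erase z) = negCount c A := by
  rw [negCount, negCount, Finset.filter_erase,
    Finset.erase_eq_of_notMem (by simp [h.not_gt])]

lemma isInnermost_of_pos {a : α} (ha : 0 < c a) (h : ∀ z ∈ A, 0 < c z → c a ≤ c z) :
    IsInnermost c A a := fun z hz hpos => by
  have hz0 := pos_of_mul_pos_right hpos ha.le
  rw [abs_of_pos ha, abs_of_pos hz0]
  exact h z hz hz0

lemma IsInnermost.of_neg {a : α} (h : IsInnermost (fun z => -c z) A a) : IsInnermost c A a :=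
  fun z hz hpos => by simpa using h z hz (by simpa using hpos)

lemma exists_isInnermost_of_pos {w : α} (hw : w ∈ A) (h0 : 0 < c w) :
    ∃ z ∈ A, 0 < c z ∧ c z ≤ c w ∧ IsInnermost c A z := by
  obtain ⟨z, hz, hmin⟩ := Finset.exists_min_image {z ∈ A | 0 < c z} c ⟨w, by simp [hw, h0]⟩
  rw [Finset.mem_filter] at hz
  refine ⟨z, hz.1, hz.2, hmin w (by simp [hw, h0]), isInnermost_of_pos hz.2 fun z' hz' h' => ?_⟩
  exact hmin z' (by simp [hz', h'])

lemma exists_isInnermost_erase_of_nearerCount_pos [DecidableEq α] {y : α}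
    (h : 0 < nearerCount c A y) :
    ∃ z ∈ A, z ≠ y ∧ IsInnermost c A z ∧ nearerCount c (A.erase z) y + 1 = nearerCount c A y ∧
      negCount c (A.erase z) = negCount c A := by
  obtain ⟨w, hw⟩ := Finset.card_pos.1 h
  rw [Finset.mem_filter] at hw
  obtain ⟨z, hz, hz0, hzw, hin⟩ := exists_isInnermost_of_pos hw.1 hw.2.1
  have hzy : c z < c y := hzw.trans_lt hw.2.2
  exact ⟨z, hz, by rintro rfl; exact hzy.false, hin, nearerCount_erase hz hz0 hzy,
    negCount_erase_of_pos hz0⟩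

lemma exists_isInnermost_erase_of_negCount_pos [DecidableEq α] {y : α} (hy : 0 < c y)
    (h : 0 < negCount c A) :
    ∃ z ∈ A, z ≠ y ∧ IsInnermost c A z ∧ nearerCount c (A.erase z) y = nearerCount c A y ∧
      negCount c (A.erase z) + 1 = negCount c A := by
  obtain ⟨w, hw⟩ := Finset.card_pos.1 h
  rw [Finset.mem_filter] at hw
  obtain ⟨z, hz, hz0, -, hin⟩ :=
    exists_isInnermost_of_pos (c := fun z => -c z) hw.1 (neg_pos.2 hw.2)
  have hz0 : c z < 0 := neg_pos.1 hz0
  exact ⟨z, hz, by rintro rfl; linarith, hin.of_neg, nearerCount_erase_of_neg hz0,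
    negCount_erase hz hz0⟩

end counts

lemma det2_comm (u v : Pt) : det2 v u = -det2 u v := by
  simp only [det2]; ring

lemma det2_neg_left (u v : Pt) : det2 (-u) v = -det2 u v := by
  simp only [det2, PiLp.neg_apply]; ring

lemma det2_neg_right (u v : Pt) : det2 u (-v) = -det2 u v := by
  simp only [det2, PiLp.neg_apply]; ring

/-- The `u`-coordinate of `y` in the affine frame `(x; u, v)`. -/
def coord (x u v y : Pt) : ℝ := det2 (y - x) v / det2 u v

section coord
variable {x u v : Pt}

lemma coord_add_smul_add_smul (hd : det2 u v ≠ 0) (a b : ℝ) :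
    coord x u v (x + (a • u + b • v)) = a := by
  rw [coord, div_eq_iff hd]
  simp only [det2, add_sub_cancel_left, PiLp.add_apply, PiLp.smul_apply, smul_eq_mul]
  ring

lemma coord_add_smul (hd : det2 u v ≠ 0) (a : ℝ) : coord x u v (x + a • u) = a := by
  simpa using coord_add_smul_add_smul (x := x) hd a 0

lemma exists_coord_of_mem_segment (hd : det2 u v ≠ 0) {t s : ℝ} {y : Pt}
    (hy : y ∈ segment ℝ (x + t • v) (x + s • u)) :
    ∃ l ∈ Set.Icc (0 : ℝ) 1, coord x v u y = (1 - l) * t ∧ coord x u v y = l * s := by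
  rw [segment_eq_image] at hy
  obtain ⟨l, hl, rfl⟩ := hy
  have hd' : det2 v u ≠ 0 := by rwa [det2_comm, neg_ne_zero]
  refine ⟨l, hl, ?_, ?_⟩
  · convert coord_add_smul_add_smul (x := x) hd' ((1 - l) * t) (l * s) using 2
    simp only [smul_add, smul_smul]; module
  · convert coord_add_smul_add_smul (x := x) hd (l * s) ((1 - l) * t) using 2
    simp only [smul_add, smul_smul]; module

end coord

def InPuncturedLine (x u : Pt) (A : Finset Pt) : Prop := ∀ a ∈ A, ∃ t : ℝ, t ≠ 0 ∧ a = x + t • u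

namespace InPuncturedLine
variable {x u v : Pt} {A : Finset Pt}

lemma mono {A' : Finset Pt} (hA : InPuncturedLine x u A) (h : A' ⊆ A) : InPuncturedLine x u A' :=
  fun a ha => hA a (h ha)

lemma neg (hA : InPuncturedLine x u A) : InPuncturedLine x (-u) A := fun a ha => by
  obtain ⟨t, ht, rfl⟩ := hA a ha
  exact ⟨-t, neg_ne_zero.2 ht, by rw [smul_neg, neg_smul, neg_neg]⟩

lemma eq_add_coord_smul (hd : det2 u v ≠ 0) (hA : InPuncturedLine x u A) {a : Pt} (ha : a ∈ A) :
    a = x + coord x u v a • u := by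
  obtain ⟨t, -, rfl⟩ := hA a ha
  rw [coord_add_smul hd]

lemma coord_ne_zero (hd : det2 u v ≠ 0) (hA : InPuncturedLine x u A) {a : Pt} (ha : a ∈ A) :
    coord x u v a ≠ 0 := by
  obtain ⟨t, ht, rfl⟩ := hA a ha
  rwa [coord_add_smul hd]

lemma coord_injOn (hd : det2 u v ≠ 0) (hA : InPuncturedLine x u A) :
    Set.InjOn (coord x u v) A := fun a ha a' ha' h => by
  rw [hA.eq_add_coord_smul hd ha, hA.eq_add_coord_smul hd ha', h]

end InPuncturedLine

section segments
variable {x u v : Pt}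

lemma segment_inter_segment_eq_empty (hd : det2 u v ≠ 0) {t t' s s' : ℝ}
    (ht : t ≠ 0) (ht' : t' ≠ 0) (hs : s ≠ 0) (hs' : s' ≠ 0) (htt' : t ≠ t') (hss' : s ≠ s')
    (hti : 0 < t * t' → |t| ≤ |t'|) (hsi : 0 < s * s' → |s| ≤ |s'|) :
    segment ℝ (x + t • v) (x + s • u) ∩ segment ℝ (x + t' • v) (x + s' • u) = ∅ := by
  refine Set.eq_empty_iff_forall_notMem.2 fun y ⟨hy, hy'⟩ => ?_
  obtain ⟨l, ⟨hl0, hl1⟩, hyv, hyu⟩ := exists_coord_of_mem_segment hd hy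
  obtain ⟨m, ⟨hm0, hm1⟩, hyv', hyu'⟩ := exists_coord_of_mem_segment hd hy'
  have hv : (1 - l) * t = (1 - m) * t' := hyv.symm.trans hyv'
  have hu : l * s = m * s' := hyu.symm.trans hyu'
  rcases le_or_gt (t * t') 0 with htt | htt
  · obtain ⟨hl, hm⟩ := eq_zero_of_mul_eq_mul_of_mul_nonpos (by linarith) (by linarith) ht ht' htt hv
    exact hss' (by rw [show l = 1 by linarith, show m = 1 by linarith] at hu; simpa using hu)
  rcases le_or_gt (s * s') 0 with hss | hss
  · obtain ⟨rfl, rfl⟩ := eq_zero_of_mul_eq_mul_of_mul_nonpos hl0 hm0 hs hs' hss hu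
    exact htt' (by simpa using hv)
  -- both edges lie in one quadrant, where the inner one has the smaller coordinates
  have hv' : (1 - l) * |t| = (1 - m) * |t'| := by
    rw [← abs_of_nonneg (by linarith : 0 ≤ 1 - l), ← abs_of_nonneg (by linarith : 0 ≤ 1 - m),
      ← abs_mul, ← abs_mul, hv]
  have hu' : l * |s| = m * |s'| := by
    rw [← abs_of_nonneg hl0, ← abs_of_nonneg hm0, ← abs_mul, ← abs_mul, hu]
  have hT := lt_of_le_of_ne (hti htt) (abs_ne_abs_of_ne_of_mul_pos htt' htt)
  have hS := lt_of_le_of_ne (hsi hss) (abs_ne_abs_of_ne_of_mul_pos hss' hss)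
  have ht0 := abs_pos.2 ht
  have hs0 := abs_pos.2 hs
  have hlm : l = m := le_antisymm (by nlinarith) (by nlinarith)
  subst hlm
  nlinarith

end segments

section matching
variable {B R : Finset Pt} {σ : Pt → Pt}

lemma IsBM.insert {r b : Pt} (hσ : IsBM B R σ) (hr : r ∉ R) (hb : b ∉ B)
    (hdisj : ∀ r' ∈ R, segment ℝ r b ∩ segment ℝ r' (σ r') = ∅) :
    IsBM (insert b B) (insert r R) (Function.update σ r b) := by
  have hσr : ∀ z ∈ R, Function.update σ r b z = σ z := fun z hz =>
    Function.update_of_ne (ne_of_mem_of_not_mem hz hr) _ _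
  refine ⟨?_, ?_⟩
  · have := (hσ.1.congr fun z hz => (hσr z hz).symm).insert (a := r) (by simpa using hb)
    simpa using this
  · intro z hz z' hz' hne
    rw [Finset.mem_insert] at hz hz'
    rcases hz with rfl | hz <;> rcases hz' with rfl | hz'
    · exact absurd rfl hne
    · simpa [hσr z' hz'] using hdisj z' hz'
    · simpa [hσr z hz, Set.inter_comm] using hdisj z hz
    · simpa [hσr z hz, hσr z' hz'] using hσ.2 z hz z' hz' hne

lemma IsBM.invFunOn (hσ : IsBM B R σ) : IsBM R B (Function.invFunOn σ R) := by
  have hinv := hσ.1.invOn_invFunOn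
  refine ⟨hσ.1.symm hinv.symm, fun b hb b' hb' hne => ?_⟩
  have hτ : ∀ c ∈ B, Function.invFunOn σ R c ∈ R ∧ σ (Function.invFunOn σ R c) = c :=
    fun c hc => ⟨hσ.1.surjOn.mapsTo_invFunOn hc, hinv.2 hc⟩
  obtain ⟨hm, he⟩ := hτ b hb
  obtain ⟨hm', he'⟩ := hτ b' hb'
  have := hσ.2 _ hm _ hm' fun h => hne (by rw [← he, ← he', h])
  rwa [he, he', segment_symm ℝ _ b, segment_symm ℝ _ b'] at this

end matching

section feasibility
open scoped Classical
variable {x u v : Pt} {B R : Finset Pt}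

lemma IsBM.nearerCount_le (hd : det2 u v ≠ 0) (hB : InPuncturedLine x u B)
    (hR : InPuncturedLine x v R) {σ : Pt → Pt} (hσ : IsBM B R σ) {r : Pt} (hr : r ∈ R)
    (hb0 : 0 < coord x u v (σ r)) :
    nearerCount (coord x v u) R r ≤
      nearerCount (coord x u v) B (σ r) + negCount (coord x u v) B := by
  have hd' : det2 v u ≠ 0 := by rwa [det2_comm, neg_ne_zero]
  set cu := coord x u v
  set cv := coord x v u
  -- a nearer red matched to a farther blue on the positive side would cross the edge `r σ(r)`
  have hmaps : ∀ z ∈ R, 0 < cv z → cv z < cv r → 0 < cu (σ z) → cu (σ z) < cu (σ r) := by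
    intro z hz hz0 hzr hbz0
    have hbz : σ z ∈ B := hσ.1.mapsTo hz
    have hne : cu (σ z) ≠ cu (σ r) := fun h =>
      hzr.ne (congrArg cv (hσ.1.injOn hz hr (hB.coord_injOn hd hbz (hσ.1.mapsTo hr) h)))
    refine lt_of_le_of_ne (not_lt.1 fun hlt => ?_) hne
    have hcross := segment_inter_segment_nonempty x u v hz0 hzr hb0 hlt
    rw [← hR.eq_add_coord_smul hd' hz, ← hR.eq_add_coord_smul hd' hr,
      ← hB.eq_add_coord_smul hd hbz, ← hB.eq_add_coord_smul hd (hσ.1.mapsTo hr),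
      hσ.2 z hz r hr (fun h => hzr.ne (congrArg cv h))] at hcross
    exact hcross.ne_empty rfl
  calc nearerCount cv R r
      ≤ #{w ∈ B | (0 < cu w ∧ cu w < cu (σ r)) ∨ cu w < 0} := by
        refine Finset.card_le_card_of_injOn σ (fun z hz => ?_) (hσ.1.injOn.mono ?_)
        · simp only [Finset.coe_filter, Set.mem_ofPred_eq] at hz ⊢
          have hbz : σ z ∈ B := hσ.1.mapsTo hz.1
          refine ⟨hbz, ?_⟩
          rcases (hB.coord_ne_zero hd hbz).lt_or_gt with hneg | hpos
          · exact Or.inr hneg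
          · exact Or.inl ⟨hpos, hmaps z hz.1 hz.2.1 hz.2.2 hpos⟩
        · exact fun z hz => (Finset.mem_filter.1 hz).1
    _ ≤ nearerCount cu B (σ r) + negCount cu B := by
        rw [Finset.filter_or]; exact Finset.card_union_le _ _

lemma BFeasible.counts_le (hd : det2 u v ≠ 0) (hB : InPuncturedLine x u B)
    (hR : InPuncturedLine x v R) {r b : Pt} (h : BFeasible B R r b) (hr : r ∈ R)
    (hr0 : 0 < coord x v u r) (hb0 : 0 < coord x u v b) :
    nearerCount (coord x v u) R r ≤ nearerCount (coord x u v) B b + negCount (coord x u v) B ∧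
      nearerCount (coord x u v) B b ≤ nearerCount (coord x v u) R r + negCount (coord x v u) R := by
  obtain ⟨σ, hσ, rfl⟩ := h
  have hd' : det2 v u ≠ 0 := by rwa [det2_comm, neg_ne_zero]
  have hτ : Function.invFunOn σ R (σ r) = r := hσ.1.injOn.leftInvOn_invFunOn hr
  refine ⟨hσ.nearerCount_le hd hB hR hr hb0, ?_⟩
  have := hσ.invFunOn.nearerCount_le hd' hR hB (hσ.1.mapsTo hr) (by rwa [hτ])
  rwa [hτ] at this

lemma IsBM.update_of_erase (hd : det2 u v ≠ 0) (hB : InPuncturedLine x u B)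
    (hR : InPuncturedLine x v R) {r b : Pt} (hr : r ∈ R) (hb : b ∈ B)
    (hir : IsInnermost (coord x v u) R r) (hib : IsInnermost (coord x u v) B b) {σ : Pt → Pt}
    (hσ : IsBM (B.erase b) (R.erase r) σ) : IsBM B R (Function.update σ r b) := by
  have hd' : det2 v u ≠ 0 := by rwa [det2_comm, neg_ne_zero]
  rw [← Finset.insert_erase hr, ← Finset.insert_erase hb]
  refine hσ.insert (Finset.notMem_erase r R) (Finset.notMem_erase b B) fun r' hr' => ?_
  obtain ⟨hr'r, hr'R⟩ := Finset.mem_erase.1 hr'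
  obtain ⟨hb'b, hb'B⟩ := Finset.mem_erase.1 (hσ.1.mapsTo hr')
  have := segment_inter_segment_eq_empty (x := x) hd (hR.coord_ne_zero hd' hr)
    (hR.coord_ne_zero hd' hr'R) (hB.coord_ne_zero hd hb) (hB.coord_ne_zero hd hb'B)
    (fun h => hr'r (hR.coord_injOn hd' hr'R hr h.symm))
    (fun h => hb'b (hB.coord_injOn hd hb'B hb h.symm)) (hir r' hr'R) (hib _ hb'B)
  rwa [← hR.eq_add_coord_smul hd' hr, ← hR.eq_add_coord_smul hd' hr'R,
    ← hB.eq_add_coord_smul hd hb, ← hB.eq_add_coord_smul hd hb'B] at this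

lemma exists_isBM (hd : det2 u v ≠ 0) (hB : InPuncturedLine x u B) (hR : InPuncturedLine x v R)
    (hcard : #B = #R) : ∃ σ, IsBM B R σ := by
  obtain ⟨n, hn⟩ : ∃ n, #R = n := ⟨_, rfl⟩
  induction n generalizing B R with
  | zero =>
    rw [hn, Finset.card_eq_zero] at hcard
    rw [Finset.card_eq_zero] at hn
    exact ⟨id, by simp [IsBM, hn, hcard]⟩
  | succ n ih =>
    obtain ⟨r, hr, hrmin⟩ := Finset.exists_min_image R (fun z => |coord x v u z|)
      (Finset.card_pos.1 (by omega))
    obtain ⟨b, hb, hbmin⟩ := Finset.exists_min_image B (fun z => |coord x u v z|)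
      (Finset.card_pos.1 (by omega))
    obtain ⟨σ, hσ⟩ := ih (hB.mono (Finset.erase_subset b B)) (hR.mono (Finset.erase_subset r R))
      (by rw [Finset.card_erase_of_mem hb, Finset.card_erase_of_mem hr, hcard])
      (by rw [Finset.card_erase_of_mem hr, hn]; rfl)
    exact ⟨_, hσ.update_of_erase hd hB hR hr hb (fun z hz _ => hrmin z hz)
      (fun z hz _ => hbmin z hz)⟩

lemma BFeasible.of_erase (hd : det2 u v ≠ 0) (hB : InPuncturedLine x u B)
    (hR : InPuncturedLine x v R) {r b r₀ b₀ : Pt} (hr₀ : r₀ ∈ R) (hb₀ : b₀ ∈ B) (hne : r₀ ≠ r)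
    (hir : IsInnermost (coord x v u) R r₀) (hib : IsInnermost (coord x u v) B b₀)
    (h : BFeasible (B.erase b₀) (R.erase r₀) r b) : BFeasible B R r b := by
  obtain ⟨σ, hσ, hσr⟩ := h
  exact ⟨_, hσ.update_of_erase hd hB hR hr₀ hb₀ hir hib, by rwa [Function.update_of_ne hne.symm]⟩

lemma bfeasible_of_counts_le (hd : det2 u v ≠ 0) (hB : InPuncturedLine x u B)
    (hR : InPuncturedLine x v R) (hcard : #B = #R) {r b : Pt} (hr : r ∈ R) (hb : b ∈ B)
    (hr0 : 0 < coord x v u r) (hb0 : 0 < coord x u v b)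
    (h₁ : nearerCount (coord x v u) R r ≤
      nearerCount (coord x u v) B b + negCount (coord x u v) B)
    (h₂ : nearerCount (coord x u v) B b ≤
      nearerCount (coord x v u) R r + negCount (coord x v u) R) :
    BFeasible B R r b := by
  obtain ⟨n, hn⟩ : ∃ n, #R = n := ⟨_, rfl⟩
  induction n generalizing B R with
  | zero => simp_all
  | succ n ih =>
  set cu := coord x u v
  set cv := coord x v u
  have hcard' {r₀ b₀ : Pt} (hr₀ : r₀ ∈ R) (hb₀ : b₀ ∈ B) : #(B.erase b₀) = #(R.erase r₀) := by
    rw [Finset.card_erase_of_mem hr₀, Finset.card_erase_of_mem hb₀, hcard]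
  -- match an innermost pair `r₀ b₀` other than `r`, `b` and recurse
  have step {r₀ b₀ : Pt} (hr₀ : r₀ ∈ R) (hb₀ : b₀ ∈ B) (hr₀r : r₀ ≠ r) (hb₀b : b₀ ≠ b)
      (hir : IsInnermost cv R r₀) (hib : IsInnermost cu B b₀)
      (h₁ : nearerCount cv (R.erase r₀) r ≤
        nearerCount cu (B.erase b₀) b + negCount cu (B.erase b₀))
      (h₂ : nearerCount cu (B.erase b₀) b ≤
        nearerCount cv (R.erase r₀) r + negCount cv (R.erase r₀)) :
      BFeasible B R r b :=
    .of_erase hd hB hR hr₀ hb₀ hr₀r hir hib <| ih (hB.mono (Finset.erase_subset b₀ B))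
      (hR.mono (Finset.erase_subset r₀ R)) (hcard' hr₀ hb₀) (Finset.mem_erase.2 ⟨hr₀r.symm, hr⟩)
      (Finset.mem_erase.2 ⟨hb₀b.symm, hb⟩) h₁ h₂ (by rw [Finset.card_erase_of_mem hr₀, hn]; rfl)
  rcases Nat.eq_zero_or_pos (nearerCount cv R r) with hα | hα <;>
    rcases Nat.eq_zero_or_pos (nearerCount cu B b) with hβ | hβ
  · obtain ⟨σ, hσ⟩ := exists_isBM hd (hB.mono (Finset.erase_subset b B))
      (hR.mono (Finset.erase_subset r R)) (hcard' hr hb)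
    exact ⟨_, hσ.update_of_erase hd hB hR hr hb
      (isInnermost_of_pos hr0 (nearerCount_eq_zero_iff.1 hα))
      (isInnermost_of_pos hb0 (nearerCount_eq_zero_iff.1 hβ)), Function.update_self ..⟩
  · obtain ⟨r₀, hr₀, hr₀r, hir, hα₀, hq₀⟩ :=
      exists_isInnermost_erase_of_negCount_pos (A := R) hr0 (by omega)
    obtain ⟨b₀, hb₀, hb₀b, hib, hβ₀, hQ₀⟩ := exists_isInnermost_erase_of_nearerCount_pos hβ
    exact step hr₀ hb₀ hr₀r hb₀b hir hib (by omega) (by omega)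
  · obtain ⟨r₀, hr₀, hr₀r, hir, hα₀, hq₀⟩ := exists_isInnermost_erase_of_nearerCount_pos hα
    obtain ⟨b₀, hb₀, hb₀b, hib, hβ₀, hQ₀⟩ :=
      exists_isInnermost_erase_of_negCount_pos (A := B) hb0 (by omega)
    exact step hr₀ hb₀ hr₀r hb₀b hir hib (by omega) (by omega)
  · obtain ⟨r₀, hr₀, hr₀r, hir, hα₀, hq₀⟩ := exists_isInnermost_erase_of_nearerCount_pos hα
    obtain ⟨b₀, hb₀, hb₀b, hib, hβ₀, hQ₀⟩ := exists_isInnermost_erase_of_nearerCount_pos hβ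
    exact step hr₀ hb₀ hr₀r hb₀b hir hib (by omega) (by omega)

theorem bfeasible_iff_counts_le (hd : det2 u v ≠ 0) (hB : InPuncturedLine x u B)
    (hR : InPuncturedLine x v R) (hcard : #B = #R) {r b : Pt} (hr : r ∈ R) (hb : b ∈ B)
    (hr0 : 0 < coord x v u r) (hb0 : 0 < coord x u v b) :
    BFeasible B R r b ↔
      nearerCount (coord x v u) R r ≤ nearerCount (coord x u v) B b + negCount (coord x u v) B ∧
      nearerCount (coord x u v) B b ≤ nearerCount (coord x v u) R r + negCount (coord x v u) R :=
  ⟨fun h => h.counts_le hd hB hR hr hr0 hb0,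
    fun h => bfeasible_of_counts_le hd hB hR hcard hr hb hr0 hb0 h.1 h.2⟩

theorem BFeasible.swap (hd : det2 u v ≠ 0) (hB : InPuncturedLine x u B)
    (hR : InPuncturedLine x v R) (hcard : #B = #R) {r r' b b' : Pt} (hr : r ∈ R) (hr' : r' ∈ R)
    (hb : b ∈ B) (hb' : b' ∈ B) (hr0 : 0 < coord x v u r) (hrr' : coord x v u r < coord x v u r')
    (hb'0 : 0 < coord x u v b') (hb'b : coord x u v b' < coord x u v b)
    (h : BFeasible B R r b) (h' : BFeasible B R r' b') :
    BFeasible B R r b' ∧ BFeasible B R r' b := by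
  have hr'0 := hr0.trans hrr'
  have hb0 := hb'0.trans hb'b
  have hα := nearerCount_lt_nearerCount hr hr0 hrr'
  have hβ := nearerCount_lt_nearerCount hb' hb'0 hb'b
  have h₁ := (bfeasible_iff_counts_le hd hB hR hcard hr hb hr0 hb0).1 h
  have h₂ := (bfeasible_iff_counts_le hd hB hR hcard hr' hb' hr'0 hb'0).1 h'
  exact ⟨(bfeasible_iff_counts_le hd hB hR hcard hr hb' hr0 hb'0).2 (by omega),
    (bfeasible_iff_counts_le hd hB hR hcard hr' hb hr'0 hb0).2 (by omega)⟩

end feasibility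

theorem eq_or_mem_openSegment_of_closest_feasible {x u v : Pt} {B R : Finset Pt}
    (hd : det2 u v ≠ 0) (hB : InPuncturedLine x u B) (hR : InPuncturedLine x v R)
    (hcard : #B = #R) {r r' b b' : Pt} (hr : r ∈ R) (hr' : r' ∈ R)
    (hr'v : r' ∈ halfLine x v) (hbetween : r ∈ openSegment ℝ x r')
    (hb : b ∈ B) (hbu : b ∈ halfLine x u) (hbf : BFeasible B R r b)
    (hbmin : ∀ b'' ∈ B, b'' ∈ halfLine x u → BFeasible B R r b'' → dist r b ≤ dist r b'')
    (hb' : b' ∈ B) (hb'u : b' ∈ halfLine x u) (hb'f : BFeasible B R r' b')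
    (hb'min : ∀ b'' ∈ B, b'' ∈ halfLine x u → BFeasible B R r' b'' → dist r' b' ≤ dist r' b'') :
    b' = b ∨ b ∈ openSegment ℝ x b' := by
  have hd' : det2 v u ≠ 0 := by rwa [det2_comm, neg_ne_zero]
  obtain ⟨t', ht', rfl⟩ := hr'v
  obtain ⟨θ, ⟨hθ0, hθ1⟩, rfl⟩ := exists_eq_add_smul_of_mem_openSegment hbetween
  obtain ⟨s, hs, rfl⟩ := hbu
  obtain ⟨s', hs', rfl⟩ := hb'u
  rcases lt_trichotomy s s' with hlt | rfl | hgt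
  · exact Or.inr (add_smul_mem_openSegment x u hs hlt)
  · exact Or.inl rfl
  obtain ⟨hrb', hr'b⟩ := hbf.swap hd hB hR hcard hr hr' hb hb'
    (by rw [coord_add_smul hd']; positivity)
    (by rw [coord_add_smul hd', coord_add_smul hd']; nlinarith)
    (by rwa [coord_add_smul hd]) (by rwa [coord_add_smul hd, coord_add_smul hd]) hb'f
  have hu : u ≠ 0 := by rintro rfl; simp [det2] at hd
  have hx : dist x (x + s' • u) < dist x (x + s • u) := by
    simp only [dist_self_add_right, norm_smul, Real.norm_eq_abs, abs_of_pos hs, abs_of_pos hs']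
    exact mul_lt_mul_of_pos_right hgt (norm_pos_iff.2 hu)
  exact ((dist_lt_dist_of_mem_openSegment hbetween hx (hb'min _ hb ⟨s, hs, rfl⟩ hr'b)).not_ge
    (hbmin _ hb' ⟨s', hs', rfl⟩ hrb')).elim

theorem dc_closest_feasible_monotone_general (n : ℕ) (x u v : Pt)
    (hnp : det2 u v ≠ 0) (B R : Finset Pt)
    (hB : ∀ b ∈ B, ∃ t : ℝ, t ≠ 0 ∧ b = x + t • u)
    (hR : ∀ r ∈ R, ∃ t : ℝ, t ≠ 0 ∧ r = x + t • v)
    (hcB : B.card = n) (hcR : R.card = n)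
    (l' : Set Pt) (hl' : l' = halfLine x u ∨ l' = halfLine x (-u))
    (r r' : Pt) (hr : r ∈ R) (hr' : r' ∈ R) (hbetween : r ∈ openSegment ℝ x r')
    (b : Pt) (hbB : b ∈ B) (hbl : b ∈ l') (hbf : BFeasible B R r b)
    (hbmin : ∀ b'' ∈ B, b'' ∈ l' → BFeasible B R r b'' → dist r b ≤ dist r b'')
    (b' : Pt) (hb'B : b' ∈ B) (hb'l : b' ∈ l') (hb'f : BFeasible B R r' b')
    (hb'min : ∀ b'' ∈ B, b'' ∈ l' → BFeasible B R r' b'' → dist r' b' ≤ dist r' b'') :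
    b' = b ∨ b ∈ openSegment ℝ x b' := by
  obtain ⟨u₀, rfl, hB₀, hd₀⟩ :
      ∃ u₀, l' = halfLine x u₀ ∧ InPuncturedLine x u₀ B ∧ det2 u₀ v ≠ 0 := by
    rcases hl' with rfl | rfl
    · exact ⟨u, rfl, hB, hnp⟩
    · exact ⟨-u, rfl, InPuncturedLine.neg hB, by rwa [det2_neg_left, neg_ne_zero]⟩
  obtain ⟨v₀, hr'v, hR₀, hd⟩ :
      ∃ v₀, r' ∈ halfLine x v₀ ∧ InPuncturedLine x v₀ R ∧ det2 u₀ v₀ ≠ 0 := by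
    obtain ⟨t, ht, rfl⟩ := hR r' hr'
    rcases ht.lt_or_gt with hneg | hpos
    · exact ⟨-v, ⟨-t, neg_pos.2 hneg, by rw [neg_smul, smul_neg, neg_neg]⟩,
        InPuncturedLine.neg hR, by rwa [det2_neg_right, neg_ne_zero]⟩
    · exact ⟨v, ⟨t, hpos, rfl⟩, hR, hd₀⟩
  exact eq_or_mem_openSegment_of_closest_feasible hd hB₀ hR₀ (hcB.trans hcR.symm) hr hr' hr'v
    hbetween hbB hbl hbf hbmin hb'B hb'l hb'f hb'min

/-- Let `P = B ∪ R` be a doubly collinear point set and `l'` one of the two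
blue half-lines. Let `r, r' ∈ R` with `r` strictly between `x` and `r'`. If `b` is a closest
point to `r` among the points of `B ∩ l'` forming a feasible edge with `r`, and `b'` is a
closest point to `r'` among the points of `B ∩ l'` forming a feasible edge with `r'`, then
`b' = b` or `b` lies strictly between `x` and `b'`. -/
theorem dc_closest_feasible_monotone (n : ℕ) (x u v : Pt) (hu : u ≠ 0) (hv : v ≠ 0)
    (hnp : det2 u v ≠ 0) (B R : Finset Pt)
    (hB : ∀ b ∈ B, ∃ t : ℝ, t ≠ 0 ∧ b = x + t • u)
    (hR : ∀ r ∈ R, ∃ t : ℝ, t ≠ 0 ∧ r = x + t • v)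
    (hcB : B.card = n) (hcR : R.card = n)
    (l' : Set Pt) (hl' : l' = halfLine x u ∨ l' = halfLine x (-u))
    (r r' : Pt) (hr : r ∈ R) (hr' : r' ∈ R) (hbetween : r ∈ openSegment ℝ x r')
    (b : Pt) (hbB : b ∈ B) (hbl : b ∈ l') (hbf : BFeasible B R r b)
    (hbmin : ∀ b'' ∈ B, b'' ∈ l' → BFeasible B R r b'' → dist r b ≤ dist r b'')
    (b' : Pt) (hb'B : b' ∈ B) (hb'l : b' ∈ l') (hb'f : BFeasible B R r' b')
    (hb'min : ∀ b'' ∈ B, b'' ∈ l' → BFeasible B R r' b'' → dist r' b' ≤ dist r' b'') :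
    b' = b ∨ b ∈ openSegment ℝ x b' :=
  dc_closest_feasible_monotone_general n x u v hnp B R hB hR hcB hcR l' hl' r r' hr hr' hbetween b
    hbB hbl hbf hbmin b' hb'B hb'l hb'f hb'min
end
end
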